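/- Let p be a symmetric δ×δ nc polynomial of degree d satisfying p(0) invertible, 𝒟_p bounded, and each 𝒟_p(n) convex. Then 𝒟_p is an open matrix convex set: (i) each 𝒟_p(n) is open and contains 0; (ii) 𝒟_p respects direct sums; (iii) if X ∈ 𝒟_p(n) and F is an n×k real contraction, then (FᵀX₁F, …, FᵀX_gF) ∈ 𝒟_p(k); (iv) each 𝒟_p(n) is convex and bounded. -/

import Mathlib

open Matrix
open scoped Matrix.Norms.L2Operator

noncomputable section

/-- A `g`-tuple of `n × n` real matrices. -/
abbrev Tuple (g n : ℕ) := Fin g → Matrix (Fin n) (Fin n) ℝ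

/-- Evaluation of a word `w` (of length `k`) in `g` noncommuting letters at the tuple `X`. -/
def wordEval {g n : ℕ} (X : Tuple g n) {k : ℕ} (w : Fin k → Fin g) :
    Matrix (Fin n) (Fin n) ℝ :=
  (List.ofFn fun i => X (w i)).prod

/-- A `δ × δ` matrix noncommutative polynomial in `g` variables of degree at most `d`,
given by its matrix coefficients indexed by words. -/
structure NCPoly (g d δ : ℕ) where
  coeff : ∀ k : ℕ, (Fin k → Fin g) → Matrix (Fin δ) (Fin δ) ℝ

/-- Evaluation `p(X) = Σ_{|w| ≤ d} p_w ⊗ w(X)`. -/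
def NCPoly.eval {g d δ : ℕ} (p : NCPoly g d δ) {n : ℕ} (X : Tuple g n) :
    Matrix (Fin δ × Fin n) (Fin δ × Fin n) ℝ :=
  ∑ k ∈ Finset.range (d + 1), ∑ w : Fin k → Fin g,
    Matrix.kroneckerMap (· * ·) (p.coeff k w) (wordEval X w)

/-- `p(0)`, the constant coefficient of `p`. -/
def NCPoly.constantCoeff {g d δ : ℕ} (p : NCPoly g d δ) : Matrix (Fin δ) (Fin δ) ℝ :=
  p.coeff 0 finZeroElim

/-- `p` takes symmetric values at tuples of symmetric matrices. -/
def NCPoly.IsSymmPoly {g d δ : ℕ} (p : NCPoly g d δ) : Prop :=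
  ∀ (n : ℕ) (X : Tuple g n), (∀ j, (X j).IsSymm) → (p.eval X).IsSymm

/-- The invertibility set `ℑ_p(n)` inside the symmetric tuples. -/
def invSet {g d δ : ℕ} (p : NCPoly g d δ) (n : ℕ) : Set (Tuple g n) :=
  {X | (∀ j, (X j).IsSymm) ∧ IsUnit (p.eval X)}

/-- `𝒟_p(n)`, the connected component of `0` of the invertibility set. -/
def Dset {g d δ : ℕ} (p : NCPoly g d δ) (n : ℕ) : Set (Tuple g n) :=
  connectedComponentIn (invSet p n) 0

/-- Direct sum of tuples. -/
def dsum {g n m : ℕ} (X : Tuple g n) (Y : Tuple g m) : Tuple g (n + m) :=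
  fun j => Matrix.reindex finSumFinEquiv finSumFinEquiv (Matrix.fromBlocks (X j) 0 0 (Y j))

/-! Convexity makes `𝒟_p(n)` star-shaped about `0`, so `X ∈ 𝒟_p(n)` exactly when `tX ∈ ℑ_p(n)`
for all `t ∈ [0, 1]`. Since `p(X ⊕ Y)` is `p(X) ⊕ p(Y)` up to a permutation and
`p(UᵀXU) = (1 ⊗ U)ᵀ p(X) (1 ⊗ U)`, this description passes to direct sums, to direct summands and
to orthogonal conjugates. A contraction `F` is the top block of the isometry
`V = [F; (1 - FᵀF)^{1/2}]`, and `V` is a corner of the symmetric orthogonal matrix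
`U = [[1 - VVᵀ, V], [Vᵀ, 0]]`. Conjugating `X ⊕ 0` by `U` and averaging with its conjugate by
`diag(1, -1)` gives `(1 - VVᵀ) X (1 - VVᵀ) ⊕ VᵀXV ∈ 𝒟_p`, whence `FᵀXF = Vᵀ(X ⊕ 0)V ∈ 𝒟_p`.
Openness holds because a ball inside the open set `{p(X) invertible}` meets the symmetric tuples
in a convex, hence connected, set. -/

open scoped Kronecker

section Reindex

variable {ι κ : Type*} [Fintype ι] [Fintype κ] (e : ι ≃ κ)

lemma reindex_transpose_mul_mul (U M : Matrix ι ι ℝ) :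
    (reindex e e U)ᵀ * reindex e e M * reindex e e U = reindex e e (Uᵀ * M * U) := by
  rw [transpose_reindex]
  simp only [reindex_apply, submatrix_mul_equiv]

lemma reindex_transpose_mul_self [DecidableEq ι] [DecidableEq κ] {U : Matrix ι ι ℝ}
    (hU : Uᵀ * U = 1) : (reindex e e U)ᵀ * reindex e e U = 1 := by
  rw [transpose_reindex, reindex_apply, reindex_apply, submatrix_mul_equiv, hU,
    submatrix_one_equiv]

end Reindex

lemma Matrix.PosSemidef.exists_eq_transpose_mul_self {ι : Type*} [Fintype ι] [DecidableEq ι]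
    {A : Matrix ι ι ℝ} (hA : A.PosSemidef) : ∃ B : Matrix ι ι ℝ, A = Bᵀ * B := by
  open scoped MatrixOrder in
  refine ⟨CFC.sqrt A, ?_⟩
  rw [← conjTranspose_eq_transpose_of_trivial, (CFC.sqrt_nonneg A).posSemidef.isHermitian.eq,
    CFC.sqrt_mul_sqrt_self A hA.nonneg]

lemma isOpen_connectedComponentIn_inter {E : Type*} [NormedAddCommGroup E] [NormedSpace ℝ E]
    {S U : Set E} (hS : Convex ℝ S) (hU : IsOpen U) (x : E) :
    IsOpen {y : S | (y : E) ∈ connectedComponentIn (S ∩ U) x} := by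
  rw [isOpen_iff_mem_nhds]
  intro y hy
  obtain ⟨ε, hε, hball⟩ := Metric.isOpen_iff.mp hU y (connectedComponentIn_subset _ _ hy).2
  filter_upwards [continuous_subtype_val.continuousAt.preimage_mem_nhds
    (Metric.ball_mem_nhds (y : E) hε)] with z hz
  have hseg : segment ℝ (y : E) z ⊆ S ∩ U := fun w hw =>
    ⟨hS.segment_subset y.2 z.2 hw,
      hball ((convex_ball _ _).segment_subset (Metric.mem_ball_self hε) hz hw)⟩
  rw [connectedComponentIn_eq hy]
  exact (convex_segment _ _).isPreconnected.subset_connectedComponentIn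
    (left_mem_segment ℝ _ _) hseg (right_mem_segment ℝ _ _)

section

variable {g d δ : ℕ}

lemma wordEval_succ {n k : ℕ} (X : Tuple g n) (w : Fin (k + 1) → Fin g) :
    wordEval X w = X (w 0) * wordEval X (w ∘ Fin.succ) := by
  simp [wordEval, List.ofFn_succ, Function.comp]

lemma continuous_wordEval {n k : ℕ} (w : Fin k → Fin g) :
    Continuous fun X : Tuple g n => wordEval X w := by
  simp only [wordEval, List.ofFn_eq_map]
  exact continuous_list_prod _ fun i _ => continuous_apply (w i)

lemma wordEval_dsum {n m : ℕ} (X : Tuple g n) (Y : Tuple g m) {k : ℕ} (w : Fin k → Fin g) :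
    wordEval (dsum X Y) w
      = reindex finSumFinEquiv finSumFinEquiv (fromBlocks (wordEval X w) 0 0 (wordEval Y w)) := by
  induction k with
  | zero => simp [wordEval]
  | succ k ih =>
    rw [wordEval_succ, wordEval_succ X, wordEval_succ Y, ih, dsum, reindex_apply, reindex_apply,
      reindex_apply, submatrix_mul_equiv, fromBlocks_multiply]
    simp

lemma wordEval_conj {n : ℕ} {U : Matrix (Fin n) (Fin n) ℝ} (hU : Uᵀ * U = 1) (X : Tuple g n)
    {k : ℕ} (w : Fin k → Fin g) :
    wordEval (fun j => Uᵀ * X j * U) w = Uᵀ * wordEval X w * U := by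
  induction k with
  | zero => simp [wordEval, hU]
  | succ k ih =>
    have hU' : U * Uᵀ = 1 := mul_eq_one_comm.mp hU
    rw [wordEval_succ, wordEval_succ X, ih]
    simp only [Matrix.mul_assoc]
    rw [← Matrix.mul_assoc U, hU', Matrix.one_mul]

def dsumIndexEquiv (δ n m : ℕ) : Fin δ × Fin (n + m) ≃ Fin δ × Fin n ⊕ Fin δ × Fin m :=
  (Equiv.prodCongr (Equiv.refl _) finSumFinEquiv.symm).trans (Equiv.prodSumDistrib _ _ _)

namespace NCPoly

lemma eval_zero (p : NCPoly g d δ) (n : ℕ) :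
    p.eval (0 : Tuple g n) = p.constantCoeff ⊗ₖ (1 : Matrix (Fin n) (Fin n) ℝ) := by
  rw [eval, Finset.sum_eq_single_of_mem 0 (by simp)]
  · simp [wordEval, constantCoeff, Unique.eq_default finZeroElim]
  · rintro (_ | k) _ hk
    · exact absurd rfl hk
    · refine Finset.sum_eq_zero fun w _ => ?_
      simp [wordEval_succ]

lemma eval_dsum (p : NCPoly g d δ) {n m : ℕ} (X : Tuple g n) (Y : Tuple g m) :
    p.eval (dsum X Y)
      = (fromBlocks (p.eval X) 0 0 (p.eval Y)).submatrix (dsumIndexEquiv δ n m)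
          (dsumIndexEquiv δ n m) := by
  ext ⟨a, r⟩ ⟨b, s⟩
  obtain ⟨r | r, rfl⟩ := finSumFinEquiv.surjective r <;>
  obtain ⟨s | s, rfl⟩ := finSumFinEquiv.surjective s <;>
  simp [eval, Matrix.sum_apply, kroneckerMap_apply, wordEval_dsum, dsumIndexEquiv]

lemma eval_conj (p : NCPoly g d δ) {n : ℕ} {U : Matrix (Fin n) (Fin n) ℝ} (hU : Uᵀ * U = 1)
    (X : Tuple g n) :
    p.eval (fun j => Uᵀ * X j * U) = (1 ⊗ₖ Uᵀ) * p.eval X * (1 ⊗ₖ U) := by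
  simp only [eval, wordEval_conj hU, Finset.mul_sum, Finset.sum_mul, ← mul_kronecker_mul,
    Matrix.one_mul, Matrix.mul_one]

lemma continuous_eval (p : NCPoly g d δ) (n : ℕ) : Continuous fun X : Tuple g n => p.eval X := by
  unfold eval
  refine continuous_finsetSum _ fun k _ => continuous_finsetSum _ fun w _ => ?_
  exact continuous_matrix fun i j => continuous_const.mul ((continuous_wordEval w).matrix_elem _ _)

end NCPoly

lemma zero_mem_invSet {p : NCPoly g d δ} (h0 : IsUnit p.constantCoeff) (n : ℕ) :
    (0 : Tuple g n) ∈ invSet p n := by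
  refine ⟨fun _ => isSymm_zero, ?_⟩
  rw [NCPoly.eval_zero, isUnit_iff_isUnit_det, det_kronecker]
  exact (((isUnit_iff_isUnit_det _).mp h0).pow _).mul (by simp)

lemma isSymm_dsum_iff {n m : ℕ} {X : Tuple g n} {Y : Tuple g m} (j : Fin g) :
    (dsum X Y j).IsSymm ↔ (X j).IsSymm ∧ (Y j).IsSymm := by
  rw [dsum, isSymm_reindex_iff, isSymm_fromBlocks_iff]
  simp

lemma dsum_mem_invSet_iff {p : NCPoly g d δ} {n m : ℕ} {X : Tuple g n} {Y : Tuple g m} :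
    dsum X Y ∈ invSet p (n + m) ↔ X ∈ invSet p n ∧ Y ∈ invSet p m := by
  simp only [invSet, Set.mem_ofPred_eq, isSymm_dsum_iff, forall_and, NCPoly.eval_dsum,
    isUnit_iff_isUnit_det (A := submatrix _ _ _), det_submatrix_equiv_self,
    det_fromBlocks_zero₂₁, IsUnit.mul_iff, ← isUnit_iff_isUnit_det]
  tauto

lemma conj_mem_invSet {p : NCPoly g d δ} {n : ℕ} {U : Matrix (Fin n) (Fin n) ℝ}
    (hU : Uᵀ * U = 1) {X : Tuple g n} (hX : X ∈ invSet p n) :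
    (fun j => Uᵀ * X j * U) ∈ invSet p n := by
  refine ⟨fun j => ?_, ?_⟩
  · simp [IsSymm, transpose_mul, (hX.1 j).eq, Matrix.mul_assoc]
  · have hK : ((1 : Matrix (Fin δ) (Fin δ) ℝ) ⊗ₖ Uᵀ) * (1 ⊗ₖ U) = 1 := by
      rw [← mul_kronecker_mul, Matrix.one_mul, hU, one_kronecker_one]
    rw [NCPoly.eval_conj p hU]
    exact ((IsUnit.of_mul_eq_one _ hK).mul hX.2).mul (IsUnit.of_mul_eq_one_right _ hK)

lemma mem_Dset_of_forall_smul_mem_invSet {p : NCPoly g d δ} {n : ℕ} {X : Tuple g n}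
    (h : ∀ t ∈ Set.Icc (0 : ℝ) 1, t • X ∈ invSet p n) : X ∈ Dset p n := by
  have hray : IsPreconnected ((· • X) '' Set.Icc (0 : ℝ) 1) :=
    isPreconnected_Icc.image _ (continuous_id.smul continuous_const).continuousOn
  refine hray.subset_connectedComponentIn ⟨0, by simp, zero_smul ℝ X⟩ ?_ ⟨1, by simp, one_smul ℝ X⟩
  rintro _ ⟨t, ht, rfl⟩
  exact h t ht

lemma mem_Dset_iff {p : NCPoly g d δ} {n : ℕ} (hstar : StarConvex ℝ 0 (Dset p n))
    {X : Tuple g n} : X ∈ Dset p n ↔ ∀ t ∈ Set.Icc (0 : ℝ) 1, t • X ∈ invSet p n :=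
  ⟨fun hX _ ht => connectedComponentIn_subset _ _ (hstar.smul_mem hX ht.1 ht.2),
    mem_Dset_of_forall_smul_mem_invSet⟩

lemma starConvex_Dset {p : NCPoly g d δ} {n : ℕ} (hconv : Convex ℝ (Dset p n)) :
    StarConvex ℝ 0 (Dset p n) := fun _ hX =>
  hconv.starConvex (mem_connectedComponentIn (connectedComponentIn_nonempty_iff.mp ⟨_, hX⟩)) hX

lemma smul_dsum {n m : ℕ} (t : ℝ) (X : Tuple g n) (Y : Tuple g m) :
    t • dsum X Y = dsum (t • X) (t • Y) := by
  funext j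
  rw [Pi.smul_apply, dsum, dsum, ← coe_reindexLinearEquiv ℝ, ← map_smul, fromBlocks_smul]
  simp

lemma dsum_mem_Dset {p : NCPoly g d δ} {n m : ℕ} (hn : StarConvex ℝ 0 (Dset p n))
    (hm : StarConvex ℝ 0 (Dset p m)) {X : Tuple g n} {Y : Tuple g m} (hX : X ∈ Dset p n)
    (hY : Y ∈ Dset p m) : dsum X Y ∈ Dset p (n + m) :=
  mem_Dset_of_forall_smul_mem_invSet fun t ht => by
    rw [smul_dsum, dsum_mem_invSet_iff]
    exact ⟨(mem_Dset_iff hn).mp hX t ht, (mem_Dset_iff hm).mp hY t ht⟩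

lemma dsum_zero_mem_Dset {p : NCPoly g d δ} (h0 : IsUnit p.constantCoeff) {n : ℕ} (k : ℕ)
    (hn : StarConvex ℝ 0 (Dset p n)) {X : Tuple g n} (hX : X ∈ Dset p n) :
    dsum X (0 : Tuple g k) ∈ Dset p (n + k) :=
  mem_Dset_of_forall_smul_mem_invSet fun t ht => by
    rw [smul_dsum, smul_zero, dsum_mem_invSet_iff]
    exact ⟨(mem_Dset_iff hn).mp hX t ht, zero_mem_invSet h0 k⟩

lemma mem_Dset_of_dsum_mem {p : NCPoly g d δ} {n m : ℕ} (hnm : StarConvex ℝ 0 (Dset p (n + m)))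
    {X : Tuple g n} {Y : Tuple g m} (h : dsum X Y ∈ Dset p (n + m)) : Y ∈ Dset p m :=
  mem_Dset_of_forall_smul_mem_invSet fun t ht => by
    have := (mem_Dset_iff hnm).mp h t ht
    rw [smul_dsum, dsum_mem_invSet_iff] at this
    exact this.2

lemma conj_mem_Dset {p : NCPoly g d δ} {n : ℕ} (hstar : StarConvex ℝ 0 (Dset p n))
    {U : Matrix (Fin n) (Fin n) ℝ} (hU : Uᵀ * U = 1) {X : Tuple g n} (hX : X ∈ Dset p n) :
    (fun j => Uᵀ * X j * U) ∈ Dset p n :=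
  mem_Dset_of_forall_smul_mem_invSet fun t ht => by
    have hconj := conj_mem_invSet hU ((mem_Dset_iff hstar).mp hX t ht)
    convert hconj using 1
    funext j
    simp

lemma convex_setOf_isSymm (n : ℕ) : Convex ℝ {X : Tuple g n | ∀ j, (X j).IsSymm} :=
  fun _ hX _ hY a b _ _ _ j => ((hX j).smul a).add ((hY j).smul b)

lemma isOpen_Dset (p : NCPoly g d δ) (n : ℕ) :
    IsOpen {X : {X : Tuple g n // ∀ j, (X j).IsSymm} | (X : Tuple g n) ∈ Dset p n} :=
  isOpen_connectedComponentIn_inter (convex_setOf_isSymm n)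
    (Units.isOpen.preimage (p.continuous_eval n)) 0

lemma isBounded_of_sum_norm_le {n : ℕ} {s : Set (Tuple g n)} {K : ℝ}
    (h : ∀ X ∈ s, ∑ j, ‖X j‖ ≤ K) : Bornology.IsBounded s := by
  refine isBounded_iff_forall_norm_le.mpr ⟨K, fun X hX => ?_⟩
  have hsum (j : Fin g) : ‖X j‖ ≤ ∑ i, ‖X i‖ :=
    Finset.single_le_sum (fun i _ => norm_nonneg (X i)) (Finset.mem_univ j)
  exact (pi_norm_le_iff_of_nonneg ((Finset.sum_nonneg fun j _ => norm_nonneg (X j)).trans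
    (h X hX))).mpr fun j => (hsum j).trans (h X hX)

lemma dsum_mem_Dset_of_fromBlocks_mem {p : NCPoly g d δ} {n m : ℕ}
    (hconv : Convex ℝ (Dset p (n + m))) {P : Tuple g n} {Q : Tuple g m}
    {R : Fin g → Matrix (Fin n) (Fin m) ℝ} {S : Fin g → Matrix (Fin m) (Fin n) ℝ}
    (h : (fun j => reindex finSumFinEquiv finSumFinEquiv (fromBlocks (P j) (R j) (S j) (Q j)))
      ∈ Dset p (n + m)) :
    dsum P Q ∈ Dset p (n + m) := by
  set D : Matrix (Fin n ⊕ Fin m) (Fin n ⊕ Fin m) ℝ := fromBlocks 1 0 0 (-1)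
  have hD : Dᵀ * D = 1 := by simp [D, fromBlocks_transpose, fromBlocks_multiply]
  have hflip :=
    conj_mem_Dset (starConvex_Dset hconv) (reindex_transpose_mul_self finSumFinEquiv hD) h
  convert hconv h hflip (by norm_num : (0 : ℝ) ≤ 1 / 2) (by norm_num : (0 : ℝ) ≤ 1 / 2)
    (by norm_num) using 1
  funext j
  have hmid : fromBlocks (P j) 0 0 (Q j) = (1 / 2 : ℝ) • fromBlocks (P j) (R j) (S j) (Q j)
      + (1 / 2 : ℝ) • (Dᵀ * fromBlocks (P j) (R j) (S j) (Q j) * D) := by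
    simp only [D, fromBlocks_transpose, fromBlocks_multiply, fromBlocks_smul, fromBlocks_add]
    congr 1 <;> simp <;> module
  rw [Pi.add_apply, Pi.smul_apply, Pi.smul_apply, reindex_transpose_mul_mul, dsum, hmid,
    ← coe_reindexLinearEquiv ℝ, map_add, map_smul, map_smul]

lemma isometry_conj_mem_Dset {p : NCPoly g d δ} (h0 : IsUnit p.constantCoeff) {N k : ℕ}
    (hN : StarConvex ℝ 0 (Dset p N)) (hNk : Convex ℝ (Dset p (N + k)))
    {V : Matrix (Fin N) (Fin k) ℝ} (hV : Vᵀ * V = 1) {X : Tuple g N} (hX : X ∈ Dset p N) :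
    (fun j => Vᵀ * X j * V) ∈ Dset p k := by
  set A : Matrix (Fin N) (Fin N) ℝ := 1 - V * Vᵀ
  have hAV : A * V = 0 := by simp [A, Matrix.sub_mul, Matrix.mul_assoc, hV]
  have hVA : Vᵀ * A = 0 := by simp [A, Matrix.mul_sub, ← Matrix.mul_assoc, hV]
  have hAA : A * A + V * Vᵀ = 1 := by
    rw [show A * A = A - V * (Vᵀ * A) by simp [A, Matrix.sub_mul, Matrix.mul_assoc], hVA]
    simp [A]
  set U : Matrix (Fin N ⊕ Fin k) (Fin N ⊕ Fin k) ℝ := fromBlocks A V Vᵀ 0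
  have hUT : Uᵀ = U := by simp [U, A, fromBlocks_transpose, transpose_sub, transpose_mul]
  have hU : Uᵀ * U = 1 := by simp [hUT, U, fromBlocks_multiply, hAV, hVA, hAA, hV]
  have hblocks (j : Fin g) : Uᵀ * fromBlocks (X j) 0 0 0 * U
      = fromBlocks (A * X j * A) (A * X j * V) (Vᵀ * X j * A) (Vᵀ * X j * V) := by
    simp [hUT, U, fromBlocks_multiply, Matrix.mul_assoc]
  have hconj := conj_mem_Dset (starConvex_Dset hNk) (reindex_transpose_mul_self finSumFinEquiv hU)
    (dsum_zero_mem_Dset h0 k hN hX)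
  simp only [dsum, Pi.zero_apply, reindex_transpose_mul_mul, hblocks] at hconj
  exact mem_Dset_of_dsum_mem (starConvex_Dset hNk) (dsum_mem_Dset_of_fromBlocks_mem hNk hconj)

lemma contraction_conj_mem_Dset {p : NCPoly g d δ} (h0 : IsUnit p.constantCoeff) {n k : ℕ}
    (hn : StarConvex ℝ 0 (Dset p n)) (hnk : StarConvex ℝ 0 (Dset p (n + k)))
    (hnkk : Convex ℝ (Dset p (n + k + k))) {X : Tuple g n} (hX : X ∈ Dset p n)
    {F : Matrix (Fin n) (Fin k) ℝ} (hF : (1 - Fᵀ * F).PosSemidef) :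
    (fun j => Fᵀ * X j * F) ∈ Dset p k := by
  obtain ⟨B, hB⟩ := hF.exists_eq_transpose_mul_self
  set V : Matrix (Fin (n + k)) (Fin k) ℝ := (fromRows F B).submatrix finSumFinEquiv.symm id
  have hV : Vᵀ * V = 1 := by
    rw [transpose_submatrix, submatrix_mul_equiv, transpose_fromRows, fromCols_mul_fromRows,
      ← hB, submatrix_id_id, add_sub_cancel]
  convert isometry_conj_mem_Dset h0 hnk hnkk hV (dsum_zero_mem_Dset h0 k hn hX) using 2 with j
  rw [dsum, reindex_apply, transpose_submatrix, transpose_fromRows, submatrix_mul_equiv,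
    submatrix_mul_equiv, fromCols_mul_fromBlocks, fromCols_mul_fromRows, submatrix_id_id]
  simp

end

theorem Dset_is_open_matrix_convex_general
    {g d δ : ℕ} (p : NCPoly g d δ)
    (h0 : IsUnit p.constantCoeff)
    (hconv : ∀ n, Convex ℝ (Dset p n))
    (hbdd : ∃ K : ℝ, ∀ n, ∀ X ∈ Dset p n, (∑ j, ‖X j‖) ≤ K) :
    (∀ n, (0 : Tuple g n) ∈ Dset p n ∧
        IsOpen {X : {X : Tuple g n // ∀ j, (X j).IsSymm} | (X : Tuple g n) ∈ Dset p n}) ∧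
    (∀ n m, ∀ X ∈ Dset p n, ∀ Y ∈ Dset p m, dsum X Y ∈ Dset p (n + m)) ∧
    (∀ n k : ℕ, ∀ X ∈ Dset p n, ∀ F : Matrix (Fin n) (Fin k) ℝ,
        (1 - Fᵀ * F).PosSemidef → (fun j => Fᵀ * X j * F) ∈ Dset p k) ∧
    (∀ n, Convex ℝ (Dset p n) ∧ Bornology.IsBounded (Dset p n)) := by
  have hstar (n : ℕ) : StarConvex ℝ 0 (Dset p n) := starConvex_Dset (hconv n)
  obtain ⟨K, hK⟩ := hbdd
  refine ⟨fun n => ⟨mem_connectedComponentIn (zero_mem_invSet h0 n), isOpen_Dset p n⟩,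
    fun n m X hX Y hY => dsum_mem_Dset (hstar n) (hstar m) hX hY,
    fun n k X hX F hF => contraction_conj_mem_Dset h0 (hstar n) (hstar _) (hconv _) hX hF,
    fun n => ⟨hconv n, isBounded_of_sum_norm_le (hK n)⟩⟩

/-- Under the standing assumptions (`p` symmetric, `p(0)` invertible, `𝒟_p` bounded and each
`𝒟_p(n)` convex), `𝒟_p` is an open matrix convex set: each `𝒟_p(n)` is open (relative to
the symmetric tuples) and contains `0`; `𝒟_p` respects direct sums; `𝒟_p` respects
simultaneous conjugation by contractions; and each `𝒟_p(n)` is convex and bounded. -/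
theorem Dset_is_open_matrix_convex
    {g d δ : ℕ} (p : NCPoly g d δ) (hsym : p.IsSymmPoly)
    (h0 : IsUnit p.constantCoeff)
    (hconv : ∀ n, Convex ℝ (Dset p n))
    (hbdd : ∃ K : ℝ, ∀ n, ∀ X ∈ Dset p n, (∑ j, ‖X j‖) ≤ K) :
    (∀ n, (0 : Tuple g n) ∈ Dset p n ∧
        IsOpen {X : {X : Tuple g n // ∀ j, (X j).IsSymm} | (X : Tuple g n) ∈ Dset p n}) ∧
    (∀ n m, ∀ X ∈ Dset p n, ∀ Y ∈ Dset p m, dsum X Y ∈ Dset p (n + m)) ∧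
    (∀ n k : ℕ, ∀ X ∈ Dset p n, ∀ F : Matrix (Fin n) (Fin k) ℝ,
        (1 - Fᵀ * F).PosSemidef → (fun j => Fᵀ * X j * F) ∈ Dset p k) ∧
    (∀ n, Convex ℝ (Dset p n) ∧ Bornology.IsBounded (Dset p n)) :=
  Dset_is_open_matrix_convex_general p h0 hconv hbdd
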